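/- In the rotational pressure-correction step, the cross term satisfies 4Δt(ũ^{n+1}, ∇gⁿ) = 2ν⁻¹Δt‖gⁿ‖² - 2ν⁻¹Δt‖g^{n+1}‖² + 2νΔt‖∇ũ^{n+1}‖² - 2νΔt‖∇×u^{n+1}‖², where g^{n+1} = ν∇·ũ^{n+1} + gⁿ. -/

import Mathlib

open MeasureTheory Real

noncomputable section

/-- Points of the two-dimensional domain. -/
abbrev E2 : Type := Fin 2 → ℝ

/-- Partial derivative in direction `i`. -/
def pd (i : Fin 2) (f : E2 → ℝ) (x : E2) : ℝ :=
  fderiv ℝ f x (Pi.single i 1)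

/-- Divergence of a vector field (given by its components). -/
def vdiv (u : Fin 2 → E2 → ℝ) (x : E2) : ℝ := ∑ i, pd i (u i) x

/-- Scalar curl of a planar vector field. -/
def vcurl (u : Fin 2 → E2 → ℝ) (x : E2) : ℝ := pd 0 (u 1) x - pd 1 (u 0) x

/-- Laplacian of a scalar field. -/
def lap (f : E2 → ℝ) (x : E2) : ℝ := ∑ i, pd i (pd i f) x

/-- `i`-th component of the advection term `(u · ∇) v`. -/
def advect (u v : Fin 2 → E2 → ℝ) (i : Fin 2) (x : E2) : ℝ :=
  ∑ j, u j x * pd j (v i) x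

/-- Squared `L²` norm of a scalar field. -/
def sL2sq (f : E2 → ℝ) : ℝ := ∫ x, (f x) ^ 2

/-- Squared `L²` norm of a vector field. -/
def vL2sq (u : Fin 2 → E2 → ℝ) : ℝ := ∫ x, ∑ i, (u i x) ^ 2

/-- Squared `L²` norm of the gradient of a scalar field, `‖∇f‖²`. -/
def gradSq (f : E2 → ℝ) : ℝ := ∫ x, ∑ i, (pd i f x) ^ 2

/-- Squared `L²` norm of the full gradient tensor of a vector field, `‖∇u‖²`. -/
def vgradSq (u : Fin 2 → E2 → ℝ) : ℝ := ∫ x, ∑ i, ∑ j, (pd j (u i) x) ^ 2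

/-- SmoothCS scalar field vanishing near the boundary (compact support). -/
def SmoothCS (f : E2 → ℝ) : Prop := ContDiff ℝ (⊤ : ℕ∞) f ∧ HasCompactSupport f

/-- SmoothCS vector field vanishing near the boundary. -/
def VSmoothCS (u : Fin 2 → E2 → ℝ) : Prop := ∀ i, SmoothCS (u i)


section Aux

open Set Metric

/-- Weak smoothness-with-compact-support predicate (`C^∞` instead of analytic). -/
def SCS (f : E2 → ℝ) : Prop := ContDiff ℝ (⊤ : ℕ∞) f ∧ HasCompactSupport f

lemma SmoothCS.scs {f : E2 → ℝ} (hf : SmoothCS f) : SCS f := ⟨hf.1.of_le (by simp), hf.2⟩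

lemma smooth_fderiv' {f : E2 → ℝ} (hf : ContDiff ℝ (⊤:ℕ∞) f) :
    ContDiff ℝ (⊤:ℕ∞) (fderiv ℝ f) :=
  hf.fderiv_right (m := ((⊤:ℕ∞) : WithTop ℕ∞)) (by exact_mod_cast le_top)

lemma SCS.pdd {f : E2 → ℝ} (hf : SCS f) (i : Fin 2) : SCS (pd i f) :=
  ⟨(smooth_fderiv' hf.1).clm_apply contDiff_const, hf.2.fderiv_apply ℝ (Pi.single i 1)⟩

lemma SCS.integrable {f : E2 → ℝ} (hf : SCS f) : MeasureTheory.Integrable f :=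
  hf.1.continuous.integrable_of_hasCompactSupport hf.2

lemma SCS.mul {f g : E2 → ℝ} (hf : ContDiff ℝ (⊤:ℕ∞) f) (hg : SCS g) :
    SCS (fun x => f x * g x) :=
  ⟨hf.mul hg.1, hg.2.mul_left⟩

lemma SCS.neg {f : E2 → ℝ} (hf : SCS f) : SCS (fun x => -(f x)) :=
  ⟨hf.1.neg, hf.2.comp_left neg_zero⟩

lemma pd_mul {f g : E2 → ℝ} (hf : ContDiff ℝ (⊤:ℕ∞) f) (hg : ContDiff ℝ (⊤:ℕ∞) g)
    (i : Fin 2) (x : E2) :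
    pd i (fun y => f y * g y) x = pd i f x * g x + f x * pd i g x := by
  unfold pd
  rw [fderiv_fun_mul (hf.differentiable (by simp)).differentiableAt
    (hg.differentiable (by simp)).differentiableAt]
  simp
  ring

lemma pd_neg {f : E2 → ℝ} (i : Fin 2) (x : E2) :
    pd i (fun y => -(f y)) x = -(pd i f x) := by
  unfold pd
  rw [fderiv_fun_neg]
  simp

lemma pd_comm {f : E2 → ℝ} (hf : ContDiff ℝ (⊤:ℕ∞) f) (i j : Fin 2) (x : E2) :
    pd i (pd j f) x = pd j (pd i f) x := by
  have hsym := (hf.contDiffAt (x := x)).isSymmSndFDerivAt (by rw [minSmoothness_of_isRCLikeNormedField]; exact WithTop.coe_le_coe.mpr (le_top : (2:ℕ∞) ≤ ⊤))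
  have h : ∀ k l : Fin 2, pd k (pd l f) x
      = fderiv ℝ (fderiv ℝ f) x (Pi.single k 1) (Pi.single l 1) := by
    intro k l
    unfold pd
    rw [fderiv_clm_apply ((smooth_fderiv' hf).differentiable
        (by simp)).differentiableAt (differentiableAt_const _)]
    simp
  rw [h, h, hsym]

lemma integral_div_eq_zero (f : Fin 2 → E2 → ℝ) (hf : ∀ i, SCS (f i)) :
    ∫ x, ∑ i, pd i (f i) x = 0 := by
  obtain ⟨r0, hr0⟩ := ((hf 0).2.isBounded).subset_closedBall 0
  obtain ⟨r1, hr1⟩ := ((hf 1).2.isBounded).subset_closedBall 0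
  set R : ℝ := max (max r0 r1) 0 with hR
  have hRsub : ∀ i, tsupport (f i) ⊆ closedBall (0:E2) R := by
    intro i
    fin_cases i
    · exact hr0.trans (closedBall_subset_closedBall (le_max_of_le_left (le_max_left _ _)))
    · exact hr1.trans (closedBall_subset_closedBall (le_max_of_le_left (le_max_right _ _)))
  have hR0 : 0 ≤ R := le_max_right _ _
  set a : E2 := fun _ => -(R+1) with ha
  set b : E2 := fun _ => R+1 with hb
  have hle : a ≤ b := fun i => by simp [ha, hb]; linarith
  have hout : ∀ (x : E2), R < ‖x‖ → (∀ i, f i x = 0) ∧ (∀ i, fderiv ℝ (f i) x = 0) := by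
    intro x hx
    have hnm : ∀ i, x ∉ tsupport (f i) := by
      intro i hmem
      have := hRsub i hmem
      rw [mem_closedBall, dist_zero_right] at this
      linarith
    exact ⟨fun i => image_eq_zero_of_notMem_tsupport (hnm i),
      fun i => image_eq_zero_of_notMem_tsupport (fun h => hnm i (tsupport_fderiv_subset ℝ h))⟩
  have key := MeasureTheory.integral_divergence_of_hasFDerivAt_off_countable' a b hle f
    (fun i x => fderiv ℝ (f i) x) ∅ countable_empty
    (fun i => ((hf i).1.continuous).continuousOn)
    (fun x _ i => (((hf i).1.differentiable (by simp)) x).hasFDerivAt)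
    (by
      apply MeasureTheory.Integrable.integrableOn
      exact MeasureTheory.integrable_finset_sum _ (fun i _ => ((hf i).pdd i).integrable))
  have hfaces : ∀ (i : Fin 2) (c : ℝ), R + 1 ≤ |c| →
      ∀ y : Fin 1 → ℝ, f i (Fin.insertNth (α := fun _ => ℝ) i c y) = 0 := by
    intro i c hc y
    refine ((hout _ ?_).1) i
    have h1 : |c| ≤ ‖(Fin.insertNth (α := fun _ => ℝ) i c y : E2)‖ := by
      have := norm_le_pi_norm (Fin.insertNth (α := fun _ => ℝ) i c y) i
      simpa [Fin.insertNth_apply_same] using this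
    linarith
  have key2 : (∫ x in Icc a b, ∑ i : Fin 2, pd i (f i) x) = 0 := by
    refine key.trans (Finset.sum_eq_zero fun i _ => ?_)
    have h1 : ∀ y : Fin 1 → ℝ, f i (Fin.insertNth (α := fun _ => ℝ) i (b i) y) = 0 :=
      fun y => hfaces i (b i) (by show R + 1 ≤ |R + 1|; rw [abs_of_nonneg (by linarith)]) y
    have h2 : ∀ y : Fin 1 → ℝ, f i (Fin.insertNth (α := fun _ => ℝ) i (a i) y) = 0 :=
      fun y => hfaces i (a i)
        (by show R + 1 ≤ |-(R + 1)|; rw [abs_neg, abs_of_nonneg (by linarith)]) y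
    simp [h1, h2]
  rw [MeasureTheory.setIntegral_eq_integral_of_forall_compl_eq_zero (fun x hx => ?_)] at key2
  · exact key2
  · have hnorm : R < ‖x‖ := by
      rw [Set.mem_Icc] at hx
      rcases not_and_or.mp hx with h | h
      · rw [Pi.le_def] at h; push_neg at h
        obtain ⟨j, hj⟩ := h
        have h1 : x j < -(R+1) := hj
        have h2 : |x j| ≤ ‖x‖ := by
          simpa [Real.norm_eq_abs] using norm_le_pi_norm x j
        have h3 : -(x j) ≤ |x j| := neg_le_abs _
        linarith
      · rw [Pi.le_def] at h; push_neg at h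
        obtain ⟨j, hj⟩ := h
        have h1 : R + 1 < x j := hj
        have h2 : |x j| ≤ ‖x‖ := by
          simpa [Real.norm_eq_abs] using norm_le_pi_norm x j
        have h3 : x j ≤ |x j| := le_abs_self _
        linarith
    refine Finset.sum_eq_zero fun i _ => ?_
    show fderiv ℝ (f i) x (Pi.single i 1) = 0
    rw [(hout x hnorm).2 i]
    simp

lemma scs_vdiv {u : Fin 2 → E2 → ℝ} (hu : ∀ i, SCS (u i)) : SCS (vdiv u) := by
  have h2 : vdiv u = fun x => pd 0 (u 0) x + pd 1 (u 1) x := by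
    funext x; simp [vdiv, Fin.sum_univ_two]
  rw [h2]
  exact ⟨((hu 0).pdd 0).1.add ((hu 1).pdd 1).1, (((hu 0).pdd 0).2).add (((hu 1).pdd 1).2)⟩

/-- Integration by parts: `∫ u·∇g = -∫ (div u) g`. -/
lemma integral_dot_grad (u : Fin 2 → E2 → ℝ) (g : E2 → ℝ)
    (hu : ∀ i, SCS (u i)) (hg : SCS g) :
    (∫ x, ∑ i, u i x * pd i g x) = - ∫ x, vdiv u x * g x := by
  have h0 := integral_div_eq_zero (fun i x => u i x * g x)
    (fun i => SCS.mul (hu i).1 hg)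
  have hpt : (fun x => ∑ i, pd i (fun y => u i y * g y) x)
      = fun x => vdiv u x * g x + ∑ i, u i x * pd i g x := by
    funext x
    rw [Finset.sum_congr rfl (fun i _ => pd_mul (hu i).1 hg.1 i x),
      Finset.sum_add_distrib, vdiv, Finset.sum_mul]
  rw [hpt] at h0
  rw [MeasureTheory.integral_add ((SCS.mul (scs_vdiv hu).1 hg).integrable)
    (MeasureTheory.integrable_finset_sum _
      (fun i _ => (SCS.mul (hu i).1 (hg.pdd i)).integrable))] at h0
  linarith

/-- `∫ (∂₀p ∂₁q - ∂₁p ∂₀q) = 0`. -/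
lemma integral_jac_eq_zero (p q : E2 → ℝ) (hp : SCS p) (hq : SCS q) :
    (∫ x, (pd 0 p x * pd 1 q x - pd 1 p x * pd 0 q x)) = 0 := by
  set F : Fin 2 → E2 → ℝ := ![fun x => p x * pd 1 q x, fun x => -(p x * pd 0 q x)] with hF
  have hFs : ∀ i, SCS (F i) := by
    intro i
    fin_cases i
    · simpa [hF] using SCS.mul hp.1 (hq.pdd 1)
    · simpa [hF] using SCS.neg (SCS.mul hp.1 (hq.pdd 0))
  have h0 := integral_div_eq_zero F hFs
  have hpt : (fun x => ∑ i : Fin 2, pd i (F i) x)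
      = fun x => pd 0 p x * pd 1 q x - pd 1 p x * pd 0 q x := by
    funext x
    rw [Fin.sum_univ_two]
    show pd 0 (fun x => p x * pd 1 q x) x + pd 1 (fun x => -(p x * pd 0 q x)) x = _
    rw [pd_mul hp.1 (hq.pdd 1).1 0 x, pd_neg (f := fun x => p x * pd 0 q x) 1 x,
      pd_mul hp.1 (hq.pdd 0).1 1 x, pd_comm hq.1 0 1 x]
    ring
  rw [hpt] at h0
  exact h0

/-- `‖∇u‖² = ‖div u‖² + ‖curl u‖²`. -/
lemma vgradSq_eq (u : Fin 2 → E2 → ℝ) (hu : ∀ i, SCS (u i)) :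
    vgradSq u = (∫ x, (vdiv u x)^2) + ∫ x, (vcurl u x)^2 := by
  have hjac := integral_jac_eq_zero (u 0) (u 1) (hu 0) (hu 1)
  have hpt : (fun x => ∑ i : Fin 2, ∑ j : Fin 2, (pd j (u i) x)^2)
      = fun x => ((vdiv u x)^2 + (vcurl u x)^2)
          + (-2) * (pd 0 (u 0) x * pd 1 (u 1) x - pd 1 (u 0) x * pd 0 (u 1) x) := by
    funext x
    simp only [vdiv, vcurl, Fin.sum_univ_two]
    ring
  have hI1 : MeasureTheory.Integrable (fun x => (vdiv u x)^2) := by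
    have := scs_vdiv hu
    simpa [pow_two] using (SCS.mul this.1 this).integrable
  have hcurlSCS : SCS (vcurl u) := by
    have : vcurl u = fun x => pd 0 (u 1) x + -(pd 1 (u 0) x) := by
      funext x; simp [vcurl]; ring
    rw [this]
    exact ⟨((hu 1).pdd 0).1.add ((hu 0).pdd 1).1.neg,
      (((hu 1).pdd 0).2).add ((((hu 0).pdd 1)).neg.2)⟩
  have hI2 : MeasureTheory.Integrable (fun x => (vcurl u x)^2) := by
    simpa [pow_two] using (SCS.mul hcurlSCS.1 hcurlSCS).integrable
  have hI3 : MeasureTheory.Integrable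
      (fun x => pd 0 (u 0) x * pd 1 (u 1) x - pd 1 (u 0) x * pd 0 (u 1) x) := by
    exact ((SCS.mul ((hu 0).pdd 0).1 ((hu 1).pdd 1)).integrable).sub
      ((SCS.mul ((hu 0).pdd 1).1 ((hu 1).pdd 0)).integrable)
  have hI12 : MeasureTheory.Integrable (fun x => (vdiv u x)^2 + (vcurl u x)^2) := hI1.add hI2
  have hI3' : MeasureTheory.Integrable
      (fun x => (-2 : ℝ) * (pd 0 (u 0) x * pd 1 (u 1) x - pd 1 (u 0) x * pd 0 (u 1) x)) :=
    hI3.const_mul _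
  rw [vgradSq, hpt, MeasureTheory.integral_add hI12 hI3',
    MeasureTheory.integral_add hI1 hI2, MeasureTheory.integral_const_mul, hjac]
  ring

end Aux

/-- Cross-term identity in the rotational pressure-correction step: with
`g^{n+1} = ν∇·ũ^{n+1} + gⁿ`, `∇·u^{n+1} = 0` and `∇×u^{n+1} = ∇×ũ^{n+1}`,
`4Δt(ũ^{n+1}, ∇gⁿ) = 2ν⁻¹Δt‖gⁿ‖² - 2ν⁻¹Δt‖g^{n+1}‖² + 2νΔt‖∇ũ^{n+1}‖² - 2νΔt‖∇×u^{n+1}‖²`. -/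
theorem rotational_cross_term (ν Δt : ℝ) (hν : 0 < ν)
    (ut u : Fin 2 → E2 → ℝ) (gn gnew : E2 → ℝ)
    (hut : VSmoothCS ut) (hu : VSmoothCS u) (hgn : SmoothCS gn)
    (hg : ∀ x, gnew x = ν * vdiv ut x + gn x)
    (hdiv : ∀ x, vdiv u x = 0)
    (hcurl : ∀ x, vcurl u x = vcurl ut x) :
    4 * Δt * (∫ x, ∑ i, ut i x * pd i gn x)
      = 2 * ν⁻¹ * Δt * sL2sq gn - 2 * ν⁻¹ * Δt * sL2sq gnew
        + 2 * ν * Δt * vgradSq ut - 2 * ν * Δt * ∫ x, (vcurl u x) ^ 2 := by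
  classical
  have hutS : ∀ i, SCS (ut i) := fun i => (hut i).scs
  have hgnS : SCS gn := hgn.scs
  have hD : SCS (vdiv ut) := scs_vdiv hutS
  set I1 : ℝ := ∫ x, (vdiv ut x)^2 with hI1
  set I2 : ℝ := ∫ x, vdiv ut x * gn x with hI2
  set I3 : ℝ := ∫ x, (gn x)^2 with hI3
  set I4 : ℝ := ∫ x, (vcurl ut x)^2 with hI4
  have hInt1 : MeasureTheory.Integrable (fun x => (vdiv ut x)^2) := by
    simpa [pow_two] using (SCS.mul hD.1 hD).integrable
  have hInt2 : MeasureTheory.Integrable (fun x => vdiv ut x * gn x) :=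
    (SCS.mul hD.1 hgnS).integrable
  have hInt3 : MeasureTheory.Integrable (fun x => (gn x)^2) := by
    simpa [pow_two] using (SCS.mul hgnS.1 hgnS).integrable
  -- cross term by integration by parts
  have hcross : (∫ x, ∑ i, ut i x * pd i gn x) = -I2 :=
    integral_dot_grad ut gn hutS hgnS
  -- expansion of ‖gnew‖²
  have hnew : sL2sq gnew = ν^2 * I1 + 2 * ν * I2 + I3 := by
    have : (fun x => (gnew x)^2)
        = fun x => ν^2 * (vdiv ut x)^2 + 2 * ν * (vdiv ut x * gn x) + (gn x)^2 := by
      funext x; rw [hg x]; ring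
    have ha : MeasureTheory.Integrable (fun x => ν^2 * (vdiv ut x)^2) := hInt1.const_mul _
    have hb : MeasureTheory.Integrable (fun x => 2 * ν * (vdiv ut x * gn x)) := hInt2.const_mul _
    have hab : MeasureTheory.Integrable
        (fun x => ν^2 * (vdiv ut x)^2 + 2 * ν * (vdiv ut x * gn x)) := ha.add hb
    rw [sL2sq, this, MeasureTheory.integral_add hab hInt3,
      MeasureTheory.integral_add ha hb,
      MeasureTheory.integral_const_mul, MeasureTheory.integral_const_mul]
  -- curl of u equals curl of ut
  have hcurlu : (∫ x, (vcurl u x)^2) = I4 := by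
    rw [hI4]
    congr 1
    funext x
    rw [hcurl x]
  -- gradient identity
  have hgrad : vgradSq ut = I1 + I4 := vgradSq_eq ut hutS
  have hsgn : sL2sq gn = I3 := rfl
  rw [hcross, hnew, hcurlu, hgrad, hsgn]
  have hν' : ν ≠ 0 := ne_of_gt hν
  field_simp
  ring
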